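/- arXiv:1705.03794 — 6 statements merged into one kernel-verified Lean document; each statement's English description precedes it below -/
import Mathlib

section
/- Suppose g is C¹ and there exist L > 0 and ε > 0 with Lε < 1 such that |∂₂g| ≤ L on the relevant region, and x: ℝ → ℝ^N is continuously differentiable, p-periodic, with sup_t |ẋ(t)| ≤ ε. If τ, τ₀: ℝ → ℝ both satisfy τ(t) = g(x(t), x(t-τ(t)), σ) and τ₀(t) = g(x(t), x(t-τ₀(t)), σ) for all t with sup_t |τ(t) - τ₀(t)| < ∞, then τ = τ₀. -/
/-!
For fixed `t`, both `τ t` and `τ₀ t` are fixed points of `s ↦ g (x t) (x (t - s)) σ`. By the mean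
value theorem `x` is `ε`-Lipschitz and `g (x t) · σ` is `L`-Lipschitz, so this map is a contraction
with constant `L ε < 1`, and a contraction has at most one fixed point.
-/

open NNReal

theorem lipschitzWith_toNNReal_of_norm_fderiv_le {E F : Type*} [NormedAddCommGroup E]
    [NormedSpace ℝ E] [NormedAddCommGroup F] [NormedSpace ℝ F] {f : E → F} {C : ℝ}
    (hf : Differentiable ℝ f) (bound : ∀ y, ‖fderiv ℝ f y‖ ≤ C) :
    LipschitzWith C.toNNReal f :=
  lipschitzWith_of_nnnorm_fderiv_le hf fun y => by
    simpa only [norm_toNNReal] using Real.toNNReal_le_toNNReal (bound y)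

theorem lipschitzWith_toNNReal_of_norm_deriv_le {F : Type*} [NormedAddCommGroup F]
    [NormedSpace ℝ F] {f : ℝ → F} {C : ℝ}
    (hf : Differentiable ℝ f) (bound : ∀ t, ‖deriv f t‖ ≤ C) :
    LipschitzWith C.toNNReal f :=
  lipschitzWith_of_nnnorm_deriv_le hf fun t => by
    simpa only [norm_toNNReal] using Real.toNNReal_le_toNNReal (bound t)

theorem contractingWith_comp_delay {E : Type*} [PseudoEMetricSpace E] {x : ℝ → E}
    {G : E → ℝ} {Kx KG : ℝ≥0} (hx : LipschitzWith Kx x) (hG : LipschitzWith KG G)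
    (hK : KG * Kx < 1) (t : ℝ) :
    ContractingWith (KG * Kx) fun s => G (x (t - s)) := by
  have hshift : LipschitzWith 1 fun s : ℝ => t - s :=
    LipschitzWith.of_dist_le_mul fun a b => by rw [dist_sub_left, NNReal.coe_one, one_mul]
  exact ⟨hK, by rw [← mul_one Kx]; exact hG.comp (hx.comp hshift)⟩

theorem stmt_1_general (N : ℕ)
    (g : EuclideanSpace ℝ (Fin N) → EuclideanSpace ℝ (Fin N) → ℝ → ℝ)
    (hg_smooth : ContDiff ℝ 1 fun q : (EuclideanSpace ℝ (Fin N)) × (EuclideanSpace ℝ (Fin N)) × ℝ =>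
      g q.1 q.2.1 q.2.2)
    (L ε : ℝ) (hL : 0 < L) (hLε : L * ε < 1)
    (hg_lip : ∀ (θ₁ θ₂ : EuclideanSpace ℝ (Fin N)) (σ' : ℝ),
      ‖fderiv ℝ (fun y => g θ₁ y σ') θ₂‖ ≤ L)
    (x : ℝ → EuclideanSpace ℝ (Fin N)) (hx : ContDiff ℝ 1 x)
    (hx' : ∀ t : ℝ, ‖deriv x t‖ ≤ ε)
    (σ : ℝ) (τ τ₀ : ℝ → ℝ)
    (hτ : ∀ t : ℝ, τ t = g (x t) (x (t - τ t)) σ)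
    (hτ₀ : ∀ t : ℝ, τ₀ t = g (x t) (x (t - τ₀ t)) σ) :
    τ = τ₀ := by
  have hx_lip : LipschitzWith ε.toNNReal x :=
    lipschitzWith_toNNReal_of_norm_deriv_le (hx.differentiable one_ne_zero) hx'
  have hK : L.toNNReal * ε.toNNReal < 1 := by
    rwa [← Real.toNNReal_mul hL.le, Real.toNNReal_lt_one]
  funext t
  have hg_slice : Differentiable ℝ fun y => g (x t) y σ :=
    (hg_smooth.differentiable one_ne_zero).comp <|
      (differentiable_const _).prodMk (differentiable_id.prodMk (differentiable_const σ))
  have hg_slice_lip : LipschitzWith L.toNNReal fun y => g (x t) y σ :=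
    lipschitzWith_toNNReal_of_norm_fderiv_le hg_slice (hg_lip (x t) · σ)
  exact (contractingWith_comp_delay hx_lip hg_slice_lip hK t).fixedPoint_unique'
    (hτ t).symm (hτ₀ t).symm

/-- uniqueness of the bounded solution τ of the state-dependent
delay equation when L·ε < 1. -/
theorem stmt_1 (N : ℕ)
    (g : EuclideanSpace ℝ (Fin N) → EuclideanSpace ℝ (Fin N) → ℝ → ℝ)
    (hg_smooth : ContDiff ℝ 1 fun q : (EuclideanSpace ℝ (Fin N)) × (EuclideanSpace ℝ (Fin N)) × ℝ =>
      g q.1 q.2.1 q.2.2)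
    (L ε : ℝ) (hL : 0 < L) (hε : 0 < ε) (hLε : L * ε < 1)
    (hg_lip : ∀ (θ₁ θ₂ : EuclideanSpace ℝ (Fin N)) (σ' : ℝ),
      ‖fderiv ℝ (fun y => g θ₁ y σ') θ₂‖ ≤ L)
    (x : ℝ → EuclideanSpace ℝ (Fin N)) (hx : ContDiff ℝ 1 x)
    (p : ℝ) (hp : 0 < p) (hper : Function.Periodic x p)
    (hx' : ∀ t : ℝ, ‖deriv x t‖ ≤ ε)
    (σ : ℝ) (τ τ₀ : ℝ → ℝ)
    (hτ : ∀ t : ℝ, τ t = g (x t) (x (t - τ t)) σ)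
    (hτ₀ : ∀ t : ℝ, τ₀ t = g (x t) (x (t - τ₀ t)) σ)
    (C : ℝ) (hbdd : ∀ t : ℝ, |τ t - τ₀ t| ≤ C) :
    τ = τ₀ :=
  stmt_1_general N g hg_smooth L ε hL hLε hg_lip x hx hx' σ τ τ₀ hτ hτ₀
end

section
/- (Vidossich's lemma) Let X be a Banach space and v: ℝ → X a p-periodic function such that (i) v is locally integrable, (ii) there exists U ∈ L¹([0, p/2]; ℝ₊) with ‖v(t) - v(s)‖ ≤ U(t-s) for almost all s ≤ t with t - s ≤ p/2, and (iii) ∫₀^p v(t) dt = 0. Then p · ‖v‖_{L^∞} ≤ 2 ∫₀^{p/2} U(t) dt. -/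
open MeasureTheory Set

/-!
By periodicity and mean zero, `p • v t = ∫ s in -p/2..p/2, (v t - v (t + s))` for every `t`.
Read along the two shears `(t, s) ↦ (t, t + s)` and `(t, s) ↦ (t + s, t)`, the modulus hypothesis
bounds the integrand by `U |s|` for a.e. `t` and a.e. `s`, and `∫ s in -p/2..p/2, U |s|` is
`2 ∫ s in 0..p/2, U s`.
-/

theorem MeasureTheory.LocallyIntegrable.intervalIntegrable {E : Type*} [NormedAddCommGroup E]
    {f : ℝ → E} {μ : Measure ℝ} (hf : LocallyIntegrable f μ) (a b : ℝ) :
    IntervalIntegrable f μ a b :=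
  intervalIntegrable_iff.mpr <| (hf.integrableOn_isCompact isCompact_uIcc).mono_set uIoc_subset_uIcc

section EvenIntegral

variable {E : Type*} [NormedAddCommGroup E] {f : ℝ → E} {a : ℝ}

theorem IntervalIntegrable.comp_abs (ha : 0 ≤ a) (hf : IntervalIntegrable f volume 0 a) :
    IntervalIntegrable (fun s ↦ f |s|) volume (-a) a := by
  have hneg : IntervalIntegrable (fun s ↦ f |s|) volume (-a) 0 := by
    have := hf.comp_sub_left 0
    simp only [zero_sub, neg_zero] at this
    refine (intervalIntegrable_congr fun s hs ↦ ?_).mp this.symm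
    rw [uIoc_of_le (neg_nonpos.mpr ha)] at hs
    simp [abs_of_nonpos hs.2]
  have hpos : IntervalIntegrable (fun s ↦ f |s|) volume 0 a :=
    (intervalIntegrable_congr fun s hs ↦ by
      rw [uIoc_of_le ha] at hs; simp [abs_of_pos hs.1]).mp hf
  exact hneg.trans hpos

theorem intervalIntegral.integral_comp_abs [NormedSpace ℝ E] (ha : 0 ≤ a)
    (hf : IntervalIntegrable f volume 0 a) :
    ∫ s in -a..a, f |s| = (2 : ℝ) • ∫ s in 0..a, f s := by
  have hsymm : ∫ s in -a..0, f |s| = ∫ s in 0..a, f |s| := by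
    simpa using (intervalIntegral.integral_comp_neg (fun s ↦ f |s|) (a := 0) (b := a)).symm
  have hpos : ∫ s in 0..a, f |s| = ∫ s in 0..a, f s :=
    intervalIntegral.integral_congr fun s hs ↦ by
      rw [uIcc_of_le ha] at hs; simp [abs_of_nonneg hs.1]
  have hint := hf.comp_abs ha
  rw [← intervalIntegral.integral_add_adjacent_intervals (hint.mono_set ?_) (hint.mono_set ?_),
    hsymm, hpos, two_smul]
  · exact uIcc_subset_uIcc left_mem_uIcc (by simp [ha])
  · exact uIcc_subset_uIcc (by simp [ha]) right_mem_uIcc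

end EvenIntegral

theorem MeasureTheory.ae_ae_add_of_ae_prod {G : Type*} [AddGroup G] [MeasurableSpace G]
    [MeasurableAdd₂ G] {μ : Measure G} [SFinite μ] [μ.IsAddLeftInvariant] {P : G × G → Prop}
    (h : ∀ᵐ q ∂μ.prod μ, P q) : ∀ᵐ t ∂μ, ∀ᵐ s ∂μ, P (t, t + s) :=
  Measure.ae_ae_of_ae_prod <| (measurePreserving_prod_add μ μ).quasiMeasurePreserving.ae h

theorem ae_ae_norm_sub_comp_add_le {X : Type*} [NormedAddCommGroup X] {v : ℝ → X} {U : ℝ → ℝ}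
    {δ : ℝ} (hmod : ∀ᵐ q : ℝ × ℝ, q.1 ≤ q.2 → q.2 - q.1 ≤ δ → ‖v q.2 - v q.1‖ ≤ U (q.2 - q.1)) :
    ∀ᵐ t, ∀ᵐ s, |s| ≤ δ → ‖v t - v (t + s)‖ ≤ U |s| := by
  rw [Measure.volume_eq_prod] at hmod
  have hswap := Measure.measurePreserving_swap.quasiMeasurePreserving.ae hmod
  filter_upwards [ae_ae_add_of_ae_prod hmod, ae_ae_add_of_ae_prod hswap] with t hfwd hbwd
  filter_upwards [hfwd, hbwd] with s hfwd hbwd hs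
  rcases le_or_gt 0 s with h0 | h0
  · rw [abs_of_nonneg h0] at hs ⊢
    simpa [norm_sub_rev] using hfwd (by linarith) (by simpa using hs)
  · rw [abs_of_neg h0] at hs ⊢
    simp only [Prod.swap_prod_mk] at hbwd
    simpa using hbwd (by linarith) (by linarith)

section Vidossich

variable {X : Type*} [NormedAddCommGroup X] [NormedSpace ℝ X] [CompleteSpace X] {v : ℝ → X}
  {p : ℝ}

theorem Function.Periodic.integral_sub_comp_add (hper : Function.Periodic v p)
    (hv : LocallyIntegrable v volume) (hmean : ∫ t in (0 : ℝ)..p, v t = 0) (t a : ℝ) :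
    ∫ s in a..a + p, (v t - v (t + s)) = p • v t := by
  have hshift : ∫ s in a..a + p, v (t + s) = 0 := by
    rw [intervalIntegral.integral_comp_add_left, ← add_assoc, hper.intervalIntegral_add_eq _ 0,
      zero_add, hmean]
  rw [intervalIntegral.integral_sub intervalIntegrable_const
    (by simpa using (hv.intervalIntegrable (t + a) (t + (a + p))).comp_add_left t),
    hshift, intervalIntegral.integral_const, sub_zero, add_sub_cancel_left]

theorem ae_mul_norm_le_two_mul_integral (hp : 0 ≤ p) (hper : Function.Periodic v p)
    (hv : LocallyIntegrable v volume) (hmean : ∫ t in (0 : ℝ)..p, v t = 0) {U : ℝ → ℝ}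
    (hU : IntervalIntegrable U volume 0 (p / 2))
    (hmod : ∀ᵐ q : ℝ × ℝ, q.1 ≤ q.2 → q.2 - q.1 ≤ p / 2 → ‖v q.2 - v q.1‖ ≤ U (q.2 - q.1)) :
    ∀ᵐ t, p * ‖v t‖ ≤ 2 * ∫ s in (0 : ℝ)..(p / 2), U s := by
  have hp2 : 0 ≤ p / 2 := by positivity
  filter_upwards [ae_ae_norm_sub_comp_add_le hmod] with t ht
  have hbound : ∀ᵐ s, s ∈ Ioc (-(p / 2)) (p / 2) → ‖v t - v (t + s)‖ ≤ U |s| := by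
    filter_upwards [ht] with s hs hmem
    exact hs (abs_le.mpr ⟨hmem.1.le, hmem.2⟩)
  calc p * ‖v t‖ = ‖∫ s in -(p / 2)..-(p / 2) + p, (v t - v (t + s))‖ := by
        rw [hper.integral_sub_comp_add hv hmean, norm_smul, Real.norm_of_nonneg hp]
    _ = ‖∫ s in -(p / 2)..p / 2, (v t - v (t + s))‖ := by
        rw [show -(p / 2) + p = p / 2 by ring]
    _ ≤ ∫ s in -(p / 2)..p / 2, U |s| :=
        intervalIntegral.norm_integral_le_of_norm_le (by linarith) hbound (hU.comp_abs hp2)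
    _ = 2 * ∫ s in (0 : ℝ)..(p / 2), U s := intervalIntegral.integral_comp_abs hp2 hU

end Vidossich

theorem MeasureTheory.ofReal_mul_eLpNorm_top_le_of_ae_bound {α E : Type*} [MeasurableSpace α]
    [NormedAddCommGroup E] [NormedSpace ℝ E] {μ : Measure α} {f : α → E} {c C : ℝ} (hc : 0 ≤ c)
    (h : ∀ᵐ x ∂μ, c * ‖f x‖ ≤ C) : ENNReal.ofReal c * eLpNorm f ⊤ μ ≤ ENNReal.ofReal C := by
  rw [← Real.enorm_eq_ofReal hc, ← eLpNorm_const_smul, eLpNorm_exponent_top]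
  refine eLpNormEssSup_le_of_ae_bound ?_
  filter_upwards [h] with x hx
  rwa [Pi.smul_apply, norm_smul, Real.norm_of_nonneg hc]

theorem stmt_3_general (X : Type*) [NormedAddCommGroup X] [NormedSpace ℝ X] [CompleteSpace X]
    (p : ℝ) (hp : 0 < p) (v : ℝ → X) (hper : Function.Periodic v p)
    (hloc : LocallyIntegrable v volume)
    (U : ℝ → ℝ)
    (hU_int : IntegrableOn U (Set.Icc (0 : ℝ) (p / 2)) volume)
    (hmod : ∀ᵐ q : ℝ × ℝ, q.1 ≤ q.2 → q.2 - q.1 ≤ p / 2 → ‖v q.2 - v q.1‖ ≤ U (q.2 - q.1))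
    (hmean : ∫ t in (0 : ℝ)..p, v t = 0) :
    ENNReal.ofReal p * eLpNorm v ⊤ volume ≤
      ENNReal.ofReal (2 * ∫ t in (0 : ℝ)..(p / 2), U t) :=
  ofReal_mul_eLpNorm_top_le_of_ae_bound hp.le <| ae_mul_norm_le_two_mul_integral hp.le hper hloc
    hmean ((intervalIntegrable_iff_integrableOn_Icc_of_le (by positivity)).mpr hU_int) hmod

/-- Vidossich's lemma: for a p-periodic, locally integrable
function `v` into a Banach space with mean zero over a period and modulus of
continuity `U`, we have `p * ‖v‖_{L^∞} ≤ 2 ∫₀^{p/2} U`. -/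
theorem stmt_3 (X : Type*) [NormedAddCommGroup X] [NormedSpace ℝ X] [CompleteSpace X]
    (p : ℝ) (hp : 0 < p) (v : ℝ → X) (hper : Function.Periodic v p)
    (hloc : LocallyIntegrable v volume)
    (U : ℝ → ℝ) (hU_nonneg : ∀ t ∈ Set.Icc (0 : ℝ) (p / 2), 0 ≤ U t)
    (hU_int : IntegrableOn U (Set.Icc (0 : ℝ) (p / 2)) volume)
    (hmod : ∀ᵐ q : ℝ × ℝ, q.1 ≤ q.2 → q.2 - q.1 ≤ p / 2 → ‖v q.2 - v q.1‖ ≤ U (q.2 - q.1))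
    (hmean : ∫ t in (0 : ℝ)..p, v t = 0) :
    ENNReal.ofReal p * eLpNorm v ⊤ volume ≤
      ENNReal.ofReal (2 * ∫ t in (0 : ℝ)..(p / 2), U t) :=
  stmt_3_general X p hp v hper hloc U hU_int hmod hmean
end

section
/- Let x be a nonconstant p-periodic C¹ solution of ẋ(t) = f(x(t), x(t-τ(t)), σ) where f is Lipschitz with constant L_f in each of its first two arguments, and suppose τ is continuously differentiable with sup_t |τ̇(t)| < ∞. Then the minimal period p satisfies p ≥ 4/(L_f(2 + ‖τ̇‖_∞)). -/
/-!
Let `v = ẋ` and `A = ‖v‖_∞`, attained at `t₀` by periodicity. Along the solution, `x` is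
`A`-Lipschitz and `t ↦ t - τ t` is `(1 + ‖τ̇‖_∞)`-Lipschitz, so the right-hand side makes `v`
Lipschitz with constant `K = L_f (2 + ‖τ̇‖_∞) A`. Since `x` is periodic, `v` has mean zero over a
period; pairing with `v t₀` and integrating `⟪v t₀, v t⟫ ≥ A² - A K |t - t₀|` over the period
centred at `t₀` gives `A² p ≤ A K p² / 4` (Vidossich's lemma with `U(t) = K t`), i.e.
`4 ≤ L_f (2 + ‖τ̇‖_∞) p`.
-/

open intervalIntegral Set
open scoped RealInnerProductSpace

theorem Function.Periodic.deriv {E : Type*} [NormedAddCommGroup E] [NormedSpace ℝ E]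
    {u : ℝ → E} {p : ℝ} (hu : Function.Periodic u p) : Function.Periodic (deriv u) p := by
  intro t
  rw [← deriv_comp_add_const, show (fun s => u (s + p)) = u from funext hu]

theorem norm_sub_le_mul_abs_of_norm_deriv_le {E : Type*} [NormedAddCommGroup E]
    [NormedSpace ℝ E] {u : ℝ → E} {C : ℝ} (hu : Differentiable ℝ u) (hC : ∀ t, ‖deriv u t‖ ≤ C)
    (s t : ℝ) : ‖u s - u t‖ ≤ C * |s - t| := by
  simpa [Real.norm_eq_abs] using Convex.norm_image_sub_le_of_norm_deriv_le
    (fun r _ => hu r) (fun r _ => hC r) convex_univ (mem_univ t) (mem_univ s)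

theorem integral_abs_sub_center {c r : ℝ} (hr : 0 ≤ r) :
    ∫ t in (c - r)..(c + r), |t - c| = r ^ 2 := by
  rw [integral_comp_sub_right (fun t => |t|), sub_sub_cancel_left, add_sub_cancel_left,
    ← integral_add_adjacent_intervals (b := 0) (continuous_abs.intervalIntegrable _ _)
      (continuous_abs.intervalIntegrable _ _)]
  have h_neg : ∫ t in (-r)..0, |t| = ∫ t in (-r)..0, -t :=
    integral_congr fun t ht => abs_of_nonpos (by rw [uIcc_of_le (by linarith)] at ht; exact ht.2)
  have h_pos : ∫ t in (0 : ℝ)..r, |t| = ∫ t in (0 : ℝ)..r, t :=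
    integral_congr fun t ht => abs_of_nonneg (by rw [uIcc_of_le hr] at ht; exact ht.1)
  rw [h_neg, h_pos, integral_neg, integral_id, integral_id]
  ring

/-- Vidossich's lemma for the modulus `U(t) = K t`. -/
theorem Function.Periodic.norm_le_mul_div_four_of_integral_eq_zero {E : Type*}
    [NormedAddCommGroup E] [InnerProductSpace ℝ E] [CompleteSpace E] {v : ℝ → E} {p K : ℝ}
    (hper : Function.Periodic v p) (hp : 0 < p) (hmean : ∫ t in (0 : ℝ)..p, v t = 0)
    (hlip : ∀ s t, ‖v s - v t‖ ≤ K * |s - t|) (t₀ : ℝ) : ‖v t₀‖ ≤ K * p / 4 := by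
  have hK : 0 ≤ K := by simpa using (norm_nonneg _).trans (hlip 1 0)
  have hv : Continuous v := (LipschitzWith.of_dist_le' fun s t => by
    simpa only [dist_eq_norm, Real.norm_eq_abs] using hlip s t).continuous
  set c := v t₀
  have h_int_zero : ∫ t in (t₀ - p / 2)..(t₀ + p / 2), ⟪c, v t⟫ = 0 := calc
    _ = ⟪c, ∫ t in (t₀ - p / 2)..(t₀ - p / 2 + p), v t⟫ := by
      rw [show t₀ - p / 2 + p = t₀ + p / 2 by ring]
      exact (innerSL ℝ c).intervalIntegral_comp_comm (hv.intervalIntegrable _ _)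
    _ = 0 := by rw [hper.intervalIntegral_add_eq _ 0, zero_add, hmean, inner_zero_right]
  have h_lower : ∀ t, (‖c‖ ^ 2 - ‖c‖ * K * |t - t₀|) ≤ ⟪c, v t⟫ := by
    intro t
    have h_split : ⟪c, v t⟫ = ‖c‖ ^ 2 + ⟪c, v t - c⟫ := by
      rw [inner_sub_right, real_inner_self_eq_norm_sq]; ring
    have h_inner := neg_le_of_abs_le (abs_real_inner_le_norm c (v t - c))
    have h_near : ‖v t - c‖ ≤ K * |t - t₀| := hlip t t₀
    nlinarith [mul_le_mul_of_nonneg_left h_near (norm_nonneg c)]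
  have h_bound_int : ∫ t in (t₀ - p / 2)..(t₀ + p / 2), (‖c‖ ^ 2 - ‖c‖ * K * |t - t₀|)
      = ‖c‖ ^ 2 * p - ‖c‖ * K * (p / 2) ^ 2 := by
    rw [integral_sub intervalIntegrable_const (Continuous.intervalIntegrable (by fun_prop) _ _),
      integral_const, integral_const_mul, integral_abs_sub_center (by linarith), smul_eq_mul]
    ring
  have h_le : ‖c‖ ^ 2 * p - ‖c‖ * K * (p / 2) ^ 2 ≤ 0 := by
    rw [← h_bound_int, ← h_int_zero]
    exact integral_mono_on (by linarith) (Continuous.intervalIntegrable (by fun_prop) _ _)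
      ((continuous_const.inner hv).intervalIntegrable _ _) fun t _ => h_lower t
  by_contra! h_gt
  have hc : 0 < ‖c‖ := lt_of_le_of_lt (by positivity) h_gt
  nlinarith [mul_pos (mul_pos hc hp) (sub_pos.2 h_gt)]

theorem norm_comp_delay_sub_le {E : Type*} [NormedAddCommGroup E] {x : ℝ → E} {τ : ℝ → ℝ}
    {A M : ℝ} (hA : 0 ≤ A) (hx : ∀ s t, ‖x s - x t‖ ≤ A * |s - t|)
    (hτ : ∀ s t, |τ s - τ t| ≤ M * |s - t|) (s t : ℝ) :
    ‖x (s - τ s) - x (t - τ t)‖ ≤ A * (1 + M) * |s - t| := calc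
  _ ≤ A * |(s - t) - (τ s - τ t)| := by rw [sub_sub_sub_comm]; exact hx _ _
  _ ≤ A * (|s - t| + M * |s - t|) := by gcongr; exact (abs_sub _ _).trans (by gcongr; exact hτ s t)
  _ = A * (1 + M) * |s - t| := by ring

theorem norm_delay_field_sub_le {E F : Type*} [NormedAddCommGroup E] [NormedAddCommGroup F]
    {g : E → E → F} {L : ℝ} (hL : 0 ≤ L)
    (hg : ∀ θ₁ θ₂ θ₁' θ₂', ‖g θ₁ θ₂ - g θ₁' θ₂'‖ ≤ L * (‖θ₁ - θ₁'‖ + ‖θ₂ - θ₂'‖))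
    {x : ℝ → E} {τ : ℝ → ℝ} {A M : ℝ} (hA : 0 ≤ A) (hx : ∀ s t, ‖x s - x t‖ ≤ A * |s - t|)
    (hτ : ∀ s t, |τ s - τ t| ≤ M * |s - t|) (s t : ℝ) :
    ‖g (x s) (x (s - τ s)) - g (x t) (x (t - τ t))‖ ≤ L * (2 + M) * A * |s - t| := calc
  _ ≤ L * (A * |s - t| + A * (1 + M) * |s - t|) := by
    refine (hg _ _ _ _).trans ?_
    gcongr
    exacts [hx s t, norm_comp_delay_sub_le hA hx hτ s t]
  _ = L * (2 + M) * A * |s - t| := by ring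

theorem stmt_5_general (N : ℕ)
    (f : EuclideanSpace ℝ (Fin N) → EuclideanSpace ℝ (Fin N) → ℝ → EuclideanSpace ℝ (Fin N))
    (Lf : ℝ) (hLf : 0 < Lf)
    (hf_lip : ∀ (θ₁ θ₂ θ₁' θ₂' : EuclideanSpace ℝ (Fin N)) (σ' : ℝ),
      ‖f θ₁ θ₂ σ' - f θ₁' θ₂' σ'‖ ≤ Lf * (‖θ₁ - θ₁'‖ + ‖θ₂ - θ₂'‖))
    (σ : ℝ) (x : ℝ → EuclideanSpace ℝ (Fin N)) (hx : ContDiff ℝ 1 x)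
    (τ : ℝ → ℝ) (hτ : ContDiff ℝ 1 τ)
    (M : ℝ) (hτ' : ∀ t : ℝ, |deriv τ t| ≤ M)
    (hsol : ∀ t : ℝ, deriv x t = f (x t) (x (t - τ t)) σ)
    (p : ℝ) (hp : 0 < p) (hper : Function.Periodic x p)
    (hnonconst : ∃ t s : ℝ, x t ≠ x s) :
    p ≥ 4 / (Lf * (2 + M)) := by
  set v := deriv x
  have hx_diff : Differentiable ℝ x := hx.differentiable one_ne_zero
  have hv_cont : Continuous v := hx.continuous_deriv le_rfl
  have hv_per : Function.Periodic v p := hper.deriv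
  obtain ⟨_, ⟨t₀, rfl⟩, ht₀⟩ := (hv_per.compact_of_continuous hp.ne' hv_cont).exists_isMaxOn
    (range_nonempty v) continuous_norm.continuousOn
  set A := ‖v t₀‖
  have hv_le : ∀ t, ‖v t‖ ≤ A := fun t => ht₀ (mem_range_self t)
  have hA : 0 < A := by
    obtain ⟨t, s, hts⟩ := hnonconst
    refine (norm_nonneg _).lt_of_ne fun hA => hts (is_const_of_deriv_eq_zero hx_diff
      (fun u => norm_le_zero_iff.mp (hA ▸ hv_le u)) t s)
  have hv_lip : ∀ s t, ‖v s - v t‖ ≤ Lf * (2 + M) * A * |s - t| := fun s t => by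
    simp only [v, hsol]
    exact norm_delay_field_sub_le hLf.le (fun _ _ _ _ => hf_lip _ _ _ _ σ) hA.le
      (norm_sub_le_mul_abs_of_norm_deriv_le hx_diff hv_le)
      (norm_sub_le_mul_abs_of_norm_deriv_le (hτ.differentiable one_ne_zero) hτ') s t
  have hv_mean : ∫ t in (0 : ℝ)..p, v t = 0 := by
    rw [integral_deriv_eq_sub (fun t _ => hx_diff t) (hv_cont.intervalIntegrable _ _),
      ← zero_add p, hper 0, sub_self]
  have h_vidossich := hv_per.norm_le_mul_div_four_of_integral_eq_zero hp hv_mean hv_lip t₀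
  have h_four : 4 ≤ Lf * (2 + M) * p := by nlinarith
  rw [ge_iff_le, div_le_iff₀ (by nlinarith)]
  linarith

/-- lower bound on the minimal period when the delay τ is C¹ with
bounded derivative: p ≥ 4/(L_f (2 + ‖τ̇‖_∞)). -/
theorem stmt_5 (N : ℕ)
    (f : EuclideanSpace ℝ (Fin N) → EuclideanSpace ℝ (Fin N) → ℝ → EuclideanSpace ℝ (Fin N))
    (Lf : ℝ) (hLf : 0 < Lf)
    (hf_lip : ∀ (θ₁ θ₂ θ₁' θ₂' : EuclideanSpace ℝ (Fin N)) (σ' : ℝ),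
      ‖f θ₁ θ₂ σ' - f θ₁' θ₂' σ'‖ ≤ Lf * (‖θ₁ - θ₁'‖ + ‖θ₂ - θ₂'‖))
    (σ : ℝ) (x : ℝ → EuclideanSpace ℝ (Fin N)) (hx : ContDiff ℝ 1 x)
    (τ : ℝ → ℝ) (hτ : ContDiff ℝ 1 τ)
    (M : ℝ) (hτ' : ∀ t : ℝ, |deriv τ t| ≤ M)
    (hsol : ∀ t : ℝ, deriv x t = f (x t) (x (t - τ t)) σ)
    (p : ℝ) (hp : 0 < p) (hper : Function.Periodic x p)
    (hnonconst : ∃ t s : ℝ, x t ≠ x s)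
    (hmin : ∀ q : ℝ, 0 < q → Function.Periodic x q → p ≤ q) :
    p ≥ 4 / (Lf * (2 + M)) :=
  stmt_5_general N f Lf hLf hf_lip σ x hx τ hτ M hτ' hsol p hp hper hnonconst
end

section
/- Let μ_m, μ_p, μ_e, α_e, α_p, z̃ > 0 and h a positive even integer. The system of equations in (x, α_m) with x, α_m > 0: (μ_m+μ_p)(μ_e+μ_p)(μ_e+μ_m) = (h α_m³ /(z̃^h μ_m²)) (α_e α_p/(μ_e μ_p))^{h-1} x^{h-3} and μ_m x = α_m/(1 + ((α_e α_p/(μ_e μ_p z̃)) x)^h) has a unique positive solution (x*, α_m*). -/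
/-!
Solving the second equation for `α_m` gives `α_m = μ_m x (1 + (A x)^h)` with
`A = α_e α_p / (μ_e μ_p z̃)`; substituting into the first turns the system into
`x^h (1 + (A x)^h)^3 = C` for an explicit `C > 0`. The left-hand side vanishes at `0`, is
continuous, unbounded and strictly increasing on `[0, ∞)`, so it takes the value `C` exactly once.
-/

open Set

lemma strictMonoOn_pow_mul_one_add_mul_pow_pow {A : ℝ} (hA : 0 ≤ A) {n : ℕ} (hn : n ≠ 0)
    (k : ℕ) : StrictMonoOn (fun x : ℝ => x ^ n * (1 + (A * x) ^ n) ^ k) (Ici 0) := by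
  intro x (hx : 0 ≤ x) y (hy : 0 ≤ y) hxy
  calc x ^ n * (1 + (A * x) ^ n) ^ k < y ^ n * (1 + (A * x) ^ n) ^ k :=
        mul_lt_mul_of_pos_right (pow_lt_pow_left₀ hxy hx hn) (by positivity)
    _ ≤ y ^ n * (1 + (A * y) ^ n) ^ k := by gcongr

lemma existsUnique_pos_pow_mul_one_add_mul_pow_pow_eq {A C : ℝ} (hA : 0 ≤ A) (hC : 0 < C)
    {n : ℕ} (hn : n ≠ 0) (k : ℕ) :
    ∃! x : ℝ, 0 < x ∧ x ^ n * (1 + (A * x) ^ n) ^ k = C := by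
  set g : ℝ → ℝ := fun x => x ^ n * (1 + (A * x) ^ n) ^ k
  have hg0 : g 0 = 0 := by simp [g, zero_pow hn]
  have hM : 1 ≤ max 1 C := le_max_left _ _
  have hgM : C ≤ g (max 1 C) :=
    calc C ≤ max 1 C := le_max_right _ _
      _ ≤ max 1 C ^ n := le_self_pow₀ hM hn
      _ ≤ g (max 1 C) := le_mul_of_one_le_right (by positivity)
          (one_le_pow₀ (le_add_of_nonneg_right (by positivity)))
  obtain ⟨x, hx, hgx⟩ : ∃ x ∈ Icc 0 (max 1 C), g x = C :=
    intermediate_value_Icc (zero_le_one.trans hM) (by fun_prop) ⟨by rw [hg0]; exact hC.le, hgM⟩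
  have hx0 : 0 < x := hx.1.lt_of_ne (by rintro rfl; exact hC.ne' (hg0 ▸ hgx).symm)
  refine ⟨x, ⟨hx0, hgx⟩, fun y ⟨hy, hgy⟩ => ?_⟩
  exact (strictMonoOn_pow_mul_one_add_mul_pow_pow hA hn k).injOn hy.le hx0.le
    (hgy.trans hgx.symm)

lemma hopf_system_iff {K z μ B A x a : ℝ} {n : ℕ} (hμ : 0 < μ) (hz : z ≠ 0) (hB : B ≠ 0)
    (hA : 0 ≤ A) (hn : n ≠ 0) (hx : 0 < x) :
    (K = n * a ^ 3 / (z ^ n * μ ^ 2) * B ^ (n - 1) * x ^ ((n : ℤ) - 3) ∧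
        μ * x = a / (1 + (A * x) ^ n)) ↔
      (x ^ n * (1 + (A * x) ^ n) ^ 3 = K * z ^ n / (n * μ * B ^ (n - 1)) ∧
        a = μ * x * (1 + (A * x) ^ n)) := by
  have hD : 0 < 1 + (A * x) ^ n := by positivity
  rw [eq_div_iff hD.ne', eq_comm (a := a)]
  refine and_congr_left fun ha => ?_
  subst ha
  have hn' : (n : ℝ) ≠ 0 := Nat.cast_ne_zero.mpr hn
  rw [zpow_sub₀ hx.ne', zpow_natCast, eq_div_iff (by positivity)]
  field_simp
  exact eq_comm

theorem stmt_8_general (μm μp μe αp αe zt : ℝ)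
    (hμm : 0 < μm) (hμp : 0 < μp) (hμe : 0 < μe)
    (hαp : 0 < αp) (hαe : 0 < αe) (hzt : 0 < zt)
    (h : ℕ) (hh : 0 < h) :
    ∃! q : ℝ × ℝ, 0 < q.1 ∧ 0 < q.2 ∧
      (μm + μp) * (μe + μp) * (μe + μm) =
        h * q.2 ^ 3 / (zt ^ h * μm ^ 2) * (αe * αp / (μe * μp)) ^ (h - 1) *
          q.1 ^ ((h : ℤ) - 3) ∧
      μm * q.1 = q.2 / (1 + (αe * αp / (μe * μp * zt) * q.1) ^ h) := by
  set A := αe * αp / (μe * μp * zt)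
  set B := αe * αp / (μe * μp)
  set K := (μm + μp) * (μe + μp) * (μe + μm)
  have hA : 0 ≤ A := by positivity
  have hB : B ≠ 0 := by positivity
  have hsystem_iff {x a : ℝ} (hx : 0 < x) :=
    hopf_system_iff (K := K) (a := a) hμm hzt.ne' hB hA hh.ne' hx
  obtain ⟨x, ⟨hx, hgx⟩, hx_unique⟩ := existsUnique_pos_pow_mul_one_add_mul_pow_pow_eq hA
    (C := K * zt ^ h / (h * μm * B ^ (h - 1))) (by positivity) hh.ne' 3
  refine ⟨(x, μm * x * (1 + (A * x) ^ h)),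
    ⟨hx, by positivity, (hsystem_iff hx).2 ⟨hgx, rfl⟩⟩, ?_⟩
  rintro ⟨y, a⟩ ⟨hy, -, hya⟩
  dsimp only at hy hya
  obtain ⟨hgy, rfl⟩ := (hsystem_iff hy).1 hya
  obtain rfl := hx_unique y ⟨hy, hgy⟩
  rfl

/-- unique positive solution (x*, α_m*) of the system determining
the Hopf bifurcation value of α_m. -/
theorem stmt_8 (μm μp μe αp αe zt : ℝ)
    (hμm : 0 < μm) (hμp : 0 < μp) (hμe : 0 < μe)
    (hαp : 0 < αp) (hαe : 0 < αe) (hzt : 0 < zt)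
    (h : ℕ) (hh : 0 < h) (hheven : Even h) :
    ∃! q : ℝ × ℝ, 0 < q.1 ∧ 0 < q.2 ∧
      (μm + μp) * (μe + μp) * (μe + μm) =
        h * q.2 ^ 3 / (zt ^ h * μm ^ 2) * (αe * αp / (μe * μp)) ^ (h - 1) *
          q.1 ^ ((h : ℤ) - 3) ∧
      μm * q.1 = q.2 / (1 + (αe * αp / (μe * μp * zt) * q.1) ^ h) :=
  stmt_8_general μm μp μe αp αe zt hμm hμp hμe hαp hαe hzt h hh
end

section
/- Let μ_m, μ_p, μ_e > 0 and c₀ > 0. The cubic polynomial P(λ) = (λ+μ_m)(λ+μ_p)(λ+μ_e) + c₀ over ℂ has purely imaginary roots λ = ±iv with v > 0 if and only if c₀ = (μ_m+μ_p)(μ_e+μ_p)(μ_e+μ_m) and v² = μ_m μ_p + μ_e(μ_m + μ_p). -/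
/-!
Writing `λ = i x` with `x` real, `(λ + a)(λ + b)(λ + c) + d` has real part `abc + d - (a + b + c) x²`
and imaginary part `x (ab + bc + ca - x²)`. For `x ≠ 0` the imaginary part vanishes iff
`x² = ab + bc + ca`, and then the real part vanishes iff `d = (a + b + c)(ab + bc + ca) - abc`,
which is `(a + b)(b + c)(c + a)`. Both parts are even or odd in `x`, so `-i x` is a root iff `i x` is.
-/

open Complex

theorem cubic_at_mul_I_eq (a b c d x : ℝ) :
    ((x : ℂ) * I + a) * ((x : ℂ) * I + b) * ((x : ℂ) * I + c) + d =
      ⟨a * b * c + d - (a + b + c) * x ^ 2, x * (a * b + c * (a + b) - x ^ 2)⟩ := by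
  apply Complex.ext <;>
    simp only [add_re, add_im, mul_re, mul_im, ofReal_re, ofReal_im, I_re, I_im, mul_zero, mul_one,
      sub_self, zero_add, add_zero] <;>
    ring

theorem cubic_at_mul_I_eq_zero_iff {a b c d x : ℝ} (hx : x ≠ 0) :
    ((x : ℂ) * I + a) * ((x : ℂ) * I + b) * ((x : ℂ) * I + c) + d = 0 ↔
      d = (a + b) * (c + b) * (c + a) ∧ x ^ 2 = a * b + c * (a + b) := by
  rw [cubic_at_mul_I_eq, Complex.ext_iff]
  simp only [Complex.zero_re, Complex.zero_im, mul_eq_zero, hx, false_or, sub_eq_zero]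
  constructor
  · rintro ⟨hre, him⟩
    refine ⟨?_, him.symm⟩
    rw [← him] at hre
    linarith
  · rintro ⟨hd, hx2⟩
    refine ⟨?_, hx2.symm⟩
    rw [hx2, hd]
    ring

theorem stmt_9_general (μm μp μe c₀ : ℝ)
    (v : ℝ) (hv : 0 < v) :
    (((v : ℂ) * I + μm) * ((v : ℂ) * I + μp) * ((v : ℂ) * I + μe) + c₀ = 0 ∧
     (-(v : ℂ) * I + μm) * (-(v : ℂ) * I + μp) * (-(v : ℂ) * I + μe) + c₀ = 0) ↔
    (c₀ = (μm + μp) * (μe + μp) * (μe + μm) ∧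
     v ^ 2 = μm * μp + μe * (μm + μp)) := by
  have hconj := cubic_at_mul_I_eq_zero_iff (a := μm) (b := μp) (c := μe) (d := c₀)
    (neg_ne_zero.mpr hv.ne')
  rw [Complex.ofReal_neg, neg_sq] at hconj
  rw [hconj, cubic_at_mul_I_eq_zero_iff hv.ne', and_self]

/-- the cubic (λ+μ_m)(λ+μ_p)(λ+μ_e) + c₀ has purely imaginary
roots ±iv (v > 0) iff c₀ = (μ_m+μ_p)(μ_e+μ_p)(μ_e+μ_m) and
v² = μ_mμ_p + μ_e(μ_m+μ_p). -/
theorem stmt_9 (μm μp μe c₀ : ℝ)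
    (hμm : 0 < μm) (hμp : 0 < μp) (hμe : 0 < μe) (hc₀ : 0 < c₀)
    (v : ℝ) (hv : 0 < v) :
    (((v : ℂ) * I + μm) * ((v : ℂ) * I + μp) * ((v : ℂ) * I + μe) + c₀ = 0 ∧
     (-(v : ℂ) * I + μm) * (-(v : ℂ) * I + μp) * (-(v : ℂ) * I + μe) + c₀ = 0) ↔
    (c₀ = (μm + μp) * (μe + μp) * (μe + μm) ∧
     v ^ 2 = μm * μp + μe * (μm + μp)) :=
  stmt_9_general μm μp μe c₀ v hv
end

section
/- Let f₀: ℝ³ × ℝ³ → ℝ³ be defined by f₀(θ₁, θ₂) = (-μ_m x₁ + α_m/(1+(z₂/z̃)^h), -μ_p y₁ + α_p x₂, -μ_e z₁ + α_e y₂) where θ₁ = (x₁,y₁,z₁), θ₂ = (x₂,y₂,z₂). Then f₀ satisfies |f₀(θ₁,θ₂) - f₀(θ̄₁,θ̄₂)| ≤ L_f(|θ₁-θ̄₁| + |θ₂-θ̄₂|) with L_f = max{μ_m, μ_p, μ_e, α_p, α_e, α_m h₀/z̃}, where h₀ = h(1-2/(h+1))^{(h-1)/h}/(1+(h-1)/(h+1))².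 -/
/-!
Write `f₀ θ₁ θ₂ = D θ₁ + P θ₂`, where `D` scales the coordinates by `-μ_m, -μ_p, -μ_e` and `P`
shifts the coordinates of `θ₂` cyclically, applying `z ↦ α_m / (1 + (z / z̃) ^ h)` in one slot and
the scalings `α_p, α_e` in the others. A coordinatewise bound `|x i| ≤ L |y (σ i)|` for a
permutation `σ` gives `‖x‖ ≤ L ‖y‖`, so it remains to bound the slope of the Hill function
`s ↦ 1 / (1 + s ^ h)`. For even `h` it is `h |s| ^ (h - 1) / (1 + |s| ^ h) ^ 2`, which is
`h u ^ p / (1 + u) ^ 2` with `u = |s| ^ h` and `p = (h - 1) / h`; by Bernoulli's inequality this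
is maximal at `u = p / (2 - p) = (h - 1) / (h + 1)`, where it equals `h₀`.
-/

open Real

/-- The constant `h₀` of the paper: the maximal slope of `s ↦ 1 / (1 + s ^ h)`. -/
noncomputable def hillSlopeMax (h : ℕ) : ℝ :=
  h * (1 - 2 / ((h : ℝ) + 1)) ^ (((h : ℝ) - 1) / h) / (1 + ((h : ℝ) - 1) / ((h : ℝ) + 1)) ^ 2

theorem rpow_div_one_add_sq_le {p u : ℝ} (hp0 : 0 < p) (hp2 : p < 2) (hu : 0 ≤ u) :
    u ^ p / (1 + u) ^ 2 ≤ (p / (2 - p)) ^ p / (1 + p / (2 - p)) ^ 2 := by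
  set c := p / (2 - p) with hc
  have hc0 : 0 < c := div_pos hp0 (by linarith)
  have hcu : 0 ≤ u / c := div_nonneg hu hc0.le
  -- Bernoulli's inequality for the exponent `p / 2 ≤ 1`, made tangent at `u = c`
  have bernoulli : (u / c) ^ (p / 2) ≤ (1 + u) / (1 + c) := by
    have key := rpow_one_add_le_one_add_mul_self (s := u / c - 1) (by linarith)
      (p := p / 2) (by linarith) (by linarith)
    have tangent : 1 + p / 2 * (u / c - 1) = (1 + u) / (1 + c) := by
      have : 2 - p ≠ 0 := by linarith
      rw [hc]; field_simp; ring
    simpa [tangent] using key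
  have hsq : (u / c) ^ p ≤ ((1 + u) / (1 + c)) ^ 2 := by
    calc (u / c) ^ p = ((u / c) ^ (p / 2)) ^ 2 := by
          rw [← rpow_natCast, ← rpow_mul hcu]; norm_num
      _ ≤ ((1 + u) / (1 + c)) ^ 2 := by gcongr
  rw [div_rpow hu hc0.le, div_pow, div_le_div_iff₀ (by positivity) (by positivity)] at hsq
  rw [div_le_div_iff₀ (by positivity) (by positivity)]
  linarith

theorem mul_pow_pred_div_one_add_pow_sq_le {h : ℕ} (hh : 2 ≤ h) {s : ℝ} (hs : 0 ≤ s) :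
    h * s ^ (h - 1) / (1 + s ^ h) ^ 2 ≤ hillSlopeMax h := by
  have hh' : (2 : ℝ) ≤ h := by exact_mod_cast hh
  set p : ℝ := ((h : ℝ) - 1) / h with hp
  have hp0 : 0 < p := div_pos (by linarith) (by positivity)
  have hp2 : p < 2 := by rw [hp, div_lt_iff₀ (by positivity)]; linarith
  have hpeak : p / (2 - p) = ((h : ℝ) - 1) / ((h : ℝ) + 1) := by
    have : (h : ℝ) ≠ 0 := by positivity
    have : (h : ℝ) + 1 ≠ 0 := by positivity
    rw [div_eq_div_iff (by linarith) (by positivity), hp]; field_simp; ring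
  have hpeak' : p / (2 - p) = 1 - 2 / ((h : ℝ) + 1) := by
    rw [hpeak]; field_simp; ring
  have hpow : (s ^ h) ^ p = s ^ (h - 1) := by
    rw [← rpow_natCast s h, ← rpow_mul hs, mul_div_cancel₀ _ (by positivity),
      ← rpow_natCast, Nat.cast_sub (by omega), Nat.cast_one]
  calc h * s ^ (h - 1) / (1 + s ^ h) ^ 2 = h * ((s ^ h) ^ p / (1 + s ^ h) ^ 2) := by
        rw [hpow, mul_div_assoc]
    _ ≤ h * ((p / (2 - p)) ^ p / (1 + p / (2 - p)) ^ 2) :=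
        mul_le_mul_of_nonneg_left (rpow_div_one_add_sq_le hp0 hp2 (pow_nonneg hs h))
          (by positivity)
    _ = hillSlopeMax h := by
        rw [hillSlopeMax, ← hpeak', ← hpeak, mul_div_assoc]

theorem hasDerivAt_inv_one_add_pow (h : ℕ) {s : ℝ} (hs : 1 + s ^ h ≠ 0) :
    HasDerivAt (fun s : ℝ => (1 + s ^ h)⁻¹) (-(h * s ^ (h - 1)) / (1 + s ^ h) ^ 2) s :=
  ((hasDerivAt_pow h s).const_add 1).inv hs

theorem abs_inv_one_add_pow_sub_le {h : ℕ} (hh : 2 ≤ h) (heven : Even h) (a b : ℝ) :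
    |(1 + a ^ h)⁻¹ - (1 + b ^ h)⁻¹| ≤ hillSlopeMax h * |a - b| := by
  have hpos : ∀ s : ℝ, 0 < 1 + s ^ h := fun s => by linarith [heven.pow_nonneg s]
  refine convex_univ.norm_image_sub_le_of_norm_hasDerivWithin_le
    (fun s _ => (hasDerivAt_inv_one_add_pow h (hpos s).ne').hasDerivWithinAt)
    (fun s _ => ?_) trivial trivial
  -- `h` is even, so the derivative at `s` is, up to sign, its value at `|s|`
  rw [norm_div, norm_neg, norm_mul, norm_pow, Real.norm_natCast, Real.norm_eq_abs,
    Real.norm_eq_abs, abs_of_pos (pow_pos (hpos s) 2), ← heven.pow_abs]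
  simpa [mul_div_assoc] using mul_pow_pred_div_one_add_pow_sq_le hh (abs_nonneg s)

theorem abs_hill_sub_le {h : ℕ} (hh : 2 ≤ h) (heven : Even h) {α z : ℝ} (hα : 0 ≤ α) (hz : 0 < z)
    (a b : ℝ) :
    |α / (1 + (a / z) ^ h) - α / (1 + (b / z) ^ h)| ≤ α * hillSlopeMax h / z * |a - b| := by
  calc |α / (1 + (a / z) ^ h) - α / (1 + (b / z) ^ h)|
      = α * |(1 + (a / z) ^ h)⁻¹ - (1 + (b / z) ^ h)⁻¹| := by
        simp only [div_eq_mul_inv α, ← mul_sub, abs_mul, abs_of_nonneg hα]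
    _ ≤ α * (hillSlopeMax h * |a / z - b / z|) := by
        gcongr; exact abs_inv_one_add_pow_sub_le hh heven _ _
    _ = α * hillSlopeMax h / z * |a - b| := by
        rw [← sub_div, abs_div, abs_of_pos hz]; ring

theorem EuclideanSpace.norm_le_mul_norm_of_abs_le {ι : Type*} [Fintype ι] (σ : Equiv.Perm ι)
    {x y : EuclideanSpace ℝ ι} {L : ℝ} (hL : 0 ≤ L) (hxy : ∀ i, |x i| ≤ L * |y (σ i)|) :
    ‖x‖ ≤ L * ‖y‖ := by
  rw [EuclideanSpace.norm_eq, EuclideanSpace.norm_eq, ← sqrt_sq hL, ← sqrt_mul (sq_nonneg _),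
    Finset.mul_sum]
  refine sqrt_le_sqrt ?_
  calc ∑ i, ‖x i‖ ^ 2 ≤ ∑ i, L ^ 2 * ‖y (σ i)‖ ^ 2 := Finset.sum_le_sum fun i _ => by
        rw [← mul_pow]; exact pow_le_pow_left₀ (norm_nonneg _) (hxy i) 2
    _ = ∑ i, L ^ 2 * ‖y i‖ ^ 2 := Equiv.sum_comp σ fun i => L ^ 2 * ‖y i‖ ^ 2

noncomputable def goodwinDecay (μm μp μe : ℝ) (θ : EuclideanSpace ℝ (Fin 3)) :
    EuclideanSpace ℝ (Fin 3) :=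
  !₂[-μm * θ 0, -μp * θ 1, -μe * θ 2]

noncomputable def goodwinProduction (g : ℝ → ℝ) (αp αe : ℝ) (θ : EuclideanSpace ℝ (Fin 3)) :
    EuclideanSpace ℝ (Fin 3) :=
  !₂[g (θ 2), αp * θ 0, αe * θ 1]

theorem abs_mul_sub_mul_le {c L : ℝ} (hc : |c| ≤ L) (x y : ℝ) :
    |c * x - c * y| ≤ L * |x - y| := by
  rw [← mul_sub, abs_mul]
  exact mul_le_mul_of_nonneg_right hc (abs_nonneg _)

theorem norm_goodwinDecay_sub_le {μm μp μe L : ℝ} (hm : |μm| ≤ L) (hp : |μp| ≤ L) (he : |μe| ≤ L)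
    (a b : EuclideanSpace ℝ (Fin 3)) :
    ‖goodwinDecay μm μp μe a - goodwinDecay μm μp μe b‖ ≤ L * ‖a - b‖ := by
  refine EuclideanSpace.norm_le_mul_norm_of_abs_le (Equiv.refl _) ((abs_nonneg _).trans hm)
    fun i => ?_
  fin_cases i
  · exact abs_mul_sub_mul_le (by rwa [abs_neg]) _ _
  · exact abs_mul_sub_mul_le (by rwa [abs_neg]) _ _
  · exact abs_mul_sub_mul_le (by rwa [abs_neg]) _ _

theorem norm_goodwinProduction_sub_le {g : ℝ → ℝ} {αp αe L : ℝ}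
    (hg : ∀ a b, |g a - g b| ≤ L * |a - b|) (hp : |αp| ≤ L) (he : |αe| ≤ L)
    (a b : EuclideanSpace ℝ (Fin 3)) :
    ‖goodwinProduction g αp αe a - goodwinProduction g αp αe b‖ ≤ L * ‖a - b‖ := by
  refine EuclideanSpace.norm_le_mul_norm_of_abs_le (finRotate 3).symm ((abs_nonneg _).trans hp)
    fun i => ?_
  fin_cases i
  · exact hg _ _
  · exact abs_mul_sub_mul_le hp _ _
  · exact abs_mul_sub_mul_le he _ _

/-- Lipschitz constant for the right-hand side of the extended
Goodwin system, in the Euclidean norm on ℝ³. -/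
theorem stmt_14 (μm μp μe αm αp αe zt : ℝ)
    (hμm : 0 < μm) (hμp : 0 < μp) (hμe : 0 < μe)
    (hαm : 0 < αm) (hαp : 0 < αp) (hαe : 0 < αe) (hzt : 0 < zt)
    (h : ℕ) (hh : 0 < h) (hheven : Even h)
    (f₀ : EuclideanSpace ℝ (Fin 3) → EuclideanSpace ℝ (Fin 3) → EuclideanSpace ℝ (Fin 3))
    (hf₀ : ∀ θ₁ θ₂ : EuclideanSpace ℝ (Fin 3),
      f₀ θ₁ θ₂ 0 = -μm * θ₁ 0 + αm / (1 + (θ₂ 2 / zt) ^ h) ∧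
      f₀ θ₁ θ₂ 1 = -μp * θ₁ 1 + αp * θ₂ 0 ∧
      f₀ θ₁ θ₂ 2 = -μe * θ₁ 2 + αe * θ₂ 1) :
    ∀ θ₁ θ₂ θ₁' θ₂' : EuclideanSpace ℝ (Fin 3),
      ‖f₀ θ₁ θ₂ - f₀ θ₁' θ₂'‖ ≤
        max μm (max μp (max μe (max αp (max αe
            (αm * ((h : ℝ) * (1 - 2 / ((h : ℝ) + 1)) ^ (((h : ℝ) - 1) / h) /
              (1 + ((h : ℝ) - 1) / ((h : ℝ) + 1)) ^ 2) / zt))))) *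
          (‖θ₁ - θ₁'‖ + ‖θ₂ - θ₂'‖) := by
  intro θ₁ θ₂ θ₁' θ₂'
  have hh2 : 2 ≤ h := by obtain ⟨k, rfl⟩ := hheven; omega
  set L := max μm (max μp (max μe (max αp (max αe (αm * hillSlopeMax h / zt)))))
  change _ ≤ L * _
  have hsplit : ∀ θ₁ θ₂, f₀ θ₁ θ₂ =
      goodwinDecay μm μp μe θ₁ + goodwinProduction (fun z => αm / (1 + (z / zt) ^ h)) αp αe θ₂ := by
    intro θ₁ θ₂
    ext i
    fin_cases i
    · exact (hf₀ θ₁ θ₂).1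
    · exact (hf₀ θ₁ θ₂).2.1
    · exact (hf₀ θ₁ θ₂).2.2
  rw [hsplit, hsplit, add_sub_add_comm, mul_add]
  refine (norm_add_le _ _).trans (add_le_add (norm_goodwinDecay_sub_le ?_ ?_ ?_ _ _)
    (norm_goodwinProduction_sub_le (fun a b => ?_) ?_ ?_ _ _))
  · simp [L, abs_of_pos hμm]
  · simp [L, abs_of_pos hμp]
  · simp [L, abs_of_pos hμe]
  · exact (abs_hill_sub_le hh2 hheven hαm.le hzt a b).trans (by gcongr; simp [L])
  · simp [L, abs_of_pos hαp]
  · simp [L, abs_of_pos hαe]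
end
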